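/- arXiv:2305.10993 — 2 statements merged into one kernel-verified Lean document; each statement's English description precedes it below -/
import Mathlib

section
/- If a sequence of maps φ = (φ_d : 𝔛(ℝ^{d}) → 𝔛(ℝ^{d}))_d is Grassmann-equivariant, then it is decoupling: for all smooth vector fields f₁ on ℝ^{d₁} and f₂ on ℝ^{d₂}, φ_{d₁+d₂}(f₁ ⊕ f₂) = φ_{d₁}(f₁) ⊕ φ_{d₂}(f₂), where (f₁ ⊕ f₂)(x,y) = (f₁(x), f₂(y)). -/
open Matrix

/-- Direct sum of vector fields: `(f₁ ⊕ f₂)(x, y) = (f₁ x, f₂ y)`. -/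
def oplusField (d₁ d₂ : ℕ) (f₁ : (Fin d₁ → ℝ) → Fin d₁ → ℝ)
    (f₂ : (Fin d₂ → ℝ) → Fin d₂ → ℝ) : (Fin (d₁ + d₂) → ℝ) → Fin (d₁ + d₂) → ℝ :=
  fun x => Fin.append (f₁ fun i => x (Fin.castAdd d₂ i)) (f₂ fun j => x (Fin.natAdd d₁ j))

/-! The coordinate projections `ℝ^{d₁+d₂} → ℝ^{d₁}` and `ℝ^{d₁+d₂} → ℝ^{d₂}` forget
coordinates, `x ↦ x ∘ ι` with `ι` injective, so they are affine maps with orthonormal rows, and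
`f₁ ⊕ f₂` is related to `f₁`, resp. `f₂`, along them. Equivariance therefore identifies the two
blocks of `φ_{d₁+d₂}(f₁ ⊕ f₂)` with `φ_{d₁} f₁` and `φ_{d₂} f₂`. -/

def GrassmannEquivariant
    (φ : ∀ d : ℕ, ((Fin d → ℝ) → Fin d → ℝ) → (Fin d → ℝ) → Fin d → ℝ) : Prop :=
  ∀ (d₁ d₂ : ℕ) (A : Matrix (Fin d₂) (Fin d₁) ℝ) (b : Fin d₂ → ℝ),
    A * Aᵀ = 1 →
    ∀ (f₁ : (Fin d₁ → ℝ) → Fin d₁ → ℝ) (f₂ : (Fin d₂ → ℝ) → Fin d₂ → ℝ),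
      (∀ x, f₂ (A.mulVec x + b) = A.mulVec (f₁ x)) →
      ∀ x, φ d₂ f₂ (A.mulVec x + b) = A.mulVec (φ d₁ f₁ x)

section SelectionMatrix

variable {R m n : Type*} [Semiring R] [Fintype n] [DecidableEq n]

variable (R) in
def selectionMatrix (ι : m → n) : Matrix m n R :=
  (1 : Matrix n n R).submatrix ι id

theorem selectionMatrix_mulVec (ι : m → n) (x : n → R) :
    selectionMatrix R ι *ᵥ x = x ∘ ι := by
  simpa [selectionMatrix] using submatrix_mulVec_equiv (1 : Matrix n n R) x ι (Equiv.refl n)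

theorem selectionMatrix_mul_transpose [DecidableEq m] {ι : m → n}
    (hι : Function.Injective ι) :
    selectionMatrix R ι * (selectionMatrix R ι)ᵀ = 1 := by
  rw [selectionMatrix, transpose_submatrix, transpose_one, ← submatrix_mul _ _ _ _ _
    Function.bijective_id, Matrix.mul_one, submatrix_one _ hι]

end SelectionMatrix

theorem GrassmannEquivariant.comp_of_injective
    {φ : ∀ d : ℕ, ((Fin d → ℝ) → Fin d → ℝ) → (Fin d → ℝ) → Fin d → ℝ}
    (hφ : GrassmannEquivariant φ) {d₁ d₂ : ℕ} {ι : Fin d₂ → Fin d₁}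
    (hι : Function.Injective ι) {f₁ : (Fin d₁ → ℝ) → Fin d₁ → ℝ}
    {f₂ : (Fin d₂ → ℝ) → Fin d₂ → ℝ} (hf : ∀ x, f₂ (x ∘ ι) = f₁ x ∘ ι) (x : Fin d₁ → ℝ) :
    φ d₂ f₂ (x ∘ ι) = φ d₁ f₁ x ∘ ι := by
  simpa only [selectionMatrix_mulVec, add_zero] using
    hφ d₁ d₂ (selectionMatrix ℝ ι) 0 (selectionMatrix_mul_transpose hι) f₁ f₂
      (by simpa only [selectionMatrix_mulVec, add_zero] using hf) x

theorem oplusField_comp_castAdd {d₁ d₂ : ℕ} (f₁ : (Fin d₁ → ℝ) → Fin d₁ → ℝ)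
    (f₂ : (Fin d₂ → ℝ) → Fin d₂ → ℝ) (x : Fin (d₁ + d₂) → ℝ) :
    oplusField d₁ d₂ f₁ f₂ x ∘ Fin.castAdd d₂ = f₁ (x ∘ Fin.castAdd d₂) := by
  funext i
  simp only [oplusField, Function.comp_apply, Fin.append_left]
  rfl

theorem oplusField_comp_natAdd {d₁ d₂ : ℕ} (f₁ : (Fin d₁ → ℝ) → Fin d₁ → ℝ)
    (f₂ : (Fin d₂ → ℝ) → Fin d₂ → ℝ) (x : Fin (d₁ + d₂) → ℝ) :
    oplusField d₁ d₂ f₁ f₂ x ∘ Fin.natAdd d₁ = f₂ (x ∘ Fin.natAdd d₁) := by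
  funext j
  simp only [oplusField, Function.comp_apply, Fin.append_right]
  rfl

/-- A Grassmann-equivariant sequence of maps on vector fields is
decoupling: `φ_{d₁+d₂}(f₁ ⊕ f₂) = φ_{d₁}(f₁) ⊕ φ_{d₂}(f₂)`. -/
theorem grassmann_equivariant_is_decoupling
    (φ : ∀ d : ℕ, ((Fin d → ℝ) → Fin d → ℝ) → (Fin d → ℝ) → Fin d → ℝ)
    (hG : ∀ (d₁ d₂ : ℕ) (A : Matrix (Fin d₂) (Fin d₁) ℝ) (b : Fin d₂ → ℝ),
      A * Aᵀ = 1 →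
      ∀ (f₁ : (Fin d₁ → ℝ) → Fin d₁ → ℝ) (f₂ : (Fin d₂ → ℝ) → Fin d₂ → ℝ),
        (∀ x, f₂ (A.mulVec x + b) = A.mulVec (f₁ x)) →
        ∀ x, φ d₂ f₂ (A.mulVec x + b) = A.mulVec (φ d₁ f₁ x)) :
    ∀ (d₁ d₂ : ℕ) (f₁ : (Fin d₁ → ℝ) → Fin d₁ → ℝ) (f₂ : (Fin d₂ → ℝ) → Fin d₂ → ℝ),
      φ (d₁ + d₂) (oplusField d₁ d₂ f₁ f₂)
        = oplusField d₁ d₂ (φ d₁ f₁) (φ d₂ f₂) := by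
  intro d₁ d₂ f₁ f₂
  funext x
  set F := oplusField d₁ d₂ f₁ f₂
  have h₁ : φ d₁ f₁ (x ∘ Fin.castAdd d₂) = φ (d₁ + d₂) F x ∘ Fin.castAdd d₂ :=
    GrassmannEquivariant.comp_of_injective hG (Fin.castAdd_injective d₁ d₂)
      (fun y => (oplusField_comp_castAdd f₁ f₂ y).symm) x
  have h₂ : φ d₂ f₂ (x ∘ Fin.natAdd d₁) = φ (d₁ + d₂) F x ∘ Fin.natAdd d₁ :=
    GrassmannEquivariant.comp_of_injective hG (Fin.natAdd_injective d₂ d₁)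
      (fun y => (oplusField_comp_natAdd f₁ f₂ y).symm) x
  change _ = Fin.append (φ d₁ f₁ (x ∘ Fin.castAdd d₂)) (φ d₂ f₂ (x ∘ Fin.natAdd d₁))
  rw [h₁, h₂]
  exact Fin.append_castAdd_natAdd.symm
end

section
/- Let d₁ ≥ d₂, let A ∈ ℝ^{d₂×d₁} satisfy A A^T = I_{d₂}, and set a(x) = Ax + b. Suppose smooth f₁ : ℝ^{d₁} → ℝ^{d₁}, f₂ : ℝ^{d₂} → ℝ^{d₂} satisfy f₂(a(x)) = A f₁(x) for all x. Then the Laplacian-type elementary differential satisfies (Δf₂)(a(x)) = A · Σ_{j,k} (A^T A)_{jk} (∂_j ∂_k f₁)(x) = A (Δ_A f₁)(x), where Δ_A g = Σ_{j,k} (A^T A)_{jk} ∂_j∂_k g. In particular, if A^T A is the orthogonal projection onto a coordinate subspace E ⊆ ℝ^{d₁} and f₁(x) depends only on the E-coordinates with values in E, then (Δf₂)(a(x)) = A (Δ f₁)(x). -/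
open Matrix

/-- Let `A ∈ ℝ^{d₂×d₁}` with `AAᵀ = I_{d₂}` (Grassmann transformation),
`a(x) = Ax + b`, and smooth `f₁, f₂` with `f₂(a(x)) = A f₁(x)`. Then
`(Δf₂)(a(x)) = A · Σ_{j,k} (AᵀA)_{jk} (∂_j∂_k f₁)(x)`; and if moreover `AᵀA` is the
orthogonal projection onto a coordinate subspace `E` and `f₁` depends only on the
`E`-coordinates with values in `E`, then `(Δf₂)(a(x)) = A (Δ f₁)(x)`. -/
theorem grassmann_laplacian_equivariance
    (d₁ d₂ : ℕ) (hge : d₂ ≤ d₁) (A : Matrix (Fin d₂) (Fin d₁) ℝ) (hA : A * Aᵀ = 1)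
    (b : Fin d₂ → ℝ)
    (f₁ : (Fin d₁ → ℝ) → Fin d₁ → ℝ) (f₂ : (Fin d₂ → ℝ) → Fin d₂ → ℝ)
    (hf₁ : ContDiff ℝ (⊤ : ℕ∞) f₁) (hf₂ : ContDiff ℝ (⊤ : ℕ∞) f₂)
    (hint : ∀ x, f₂ (A.mulVec x + b) = A.mulVec (f₁ x)) :
    (∀ x : Fin d₁ → ℝ,
      (∑ j : Fin d₂, fderiv ℝ (fderiv ℝ f₂) (A.mulVec x + b)
          (Pi.single j 1) (Pi.single j 1))
        = A.mulVec (∑ p : Fin d₁, ∑ q : Fin d₁,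
            (Aᵀ * A) p q • fderiv ℝ (fderiv ℝ f₁) x (Pi.single p 1) (Pi.single q 1))) ∧
    (∀ E : Finset (Fin d₁),
      (Aᵀ * A = Matrix.of fun i j => if i = j ∧ i ∈ E then (1 : ℝ) else 0) →
      (∀ x y : Fin d₁ → ℝ, (∀ i ∈ E, x i = y i) → f₁ x = f₁ y) →
      (∀ (x : Fin d₁ → ℝ) (i : Fin d₁), i ∉ E → f₁ x i = 0) →
      ∀ x : Fin d₁ → ℝ,
        (∑ j : Fin d₂, fderiv ℝ (fderiv ℝ f₂) (A.mulVec x + b)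
            (Pi.single j 1) (Pi.single j 1))
          = A.mulVec (∑ p : Fin d₁,
              fderiv ℝ (fderiv ℝ f₁) x (Pi.single p 1) (Pi.single p 1))) := by
  classical
  set LA : (Fin d₁ → ℝ) →L[ℝ] (Fin d₂ → ℝ) :=
    LinearMap.toContinuousLinearMap A.mulVecLin with hLAdef
  have hLAapp : ∀ v, LA v = A.mulVec v := fun v => rfl
  have ha : ∀ y : Fin d₁ → ℝ, HasFDerivAt (fun z => A.mulVec z + b) LA y := by
    intro y
    exact (LA.hasFDerivAt (x := y)).add_const b
  have hd2f2 : ContDiff ℝ (⊤ : ℕ∞) (fderiv ℝ f₂) := hf₂.fderiv_right (by simp)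
  have hd2f1 : ContDiff ℝ (⊤ : ℕ∞) (fderiv ℝ f₁) := hf₁.fderiv_right (by simp)
  -- first derivative identity
  have hfirst : ∀ (y : Fin d₁ → ℝ) (v : Fin d₁ → ℝ),
      fderiv ℝ f₂ (A.mulVec y + b) (LA v) = A.mulVec (fderiv ℝ f₁ y v) := by
    intro y v
    have h1 : HasFDerivAt (fun z => f₂ (A.mulVec z + b))
        ((fderiv ℝ f₂ (A.mulVec y + b)).comp LA) y :=
      ((hf₂.differentiable (by simp) (A.mulVec y + b)).hasFDerivAt).comp y (ha y)
    have h2 : HasFDerivAt (fun z => f₂ (A.mulVec z + b))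
        (LA.comp (fderiv ℝ f₁ y)) y := by
      have h := LA.hasFDerivAt.comp y (hf₁.differentiable (by simp) y).hasFDerivAt
      have hfun : (fun z => f₂ (A.mulVec z + b)) = fun z => LA (f₁ z) := by
        funext z; rw [hint z]; rfl
      rw [hfun]; exact h
    have := congrArg (fun (B : (Fin d₁ → ℝ) →L[ℝ] (Fin d₂ → ℝ)) => B v) (h1.unique h2)
    simpa [hLAapp] using this
  -- second derivative identity
  have hsecond : ∀ (y u v : Fin d₁ → ℝ),
      fderiv ℝ (fderiv ℝ f₂) (A.mulVec y + b) (LA u) (LA v)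
        = A.mulVec (fderiv ℝ (fderiv ℝ f₁) y u v) := by
    intro y u v
    have hL : HasFDerivAt (fun z => fderiv ℝ f₂ (A.mulVec z + b) (LA v))
        (((ContinuousLinearMap.apply ℝ (Fin d₂ → ℝ) (LA v)).comp
          (fderiv ℝ (fderiv ℝ f₂) (A.mulVec y + b))).comp LA) y := by
      have hi : HasFDerivAt (fun z => fderiv ℝ f₂ (A.mulVec z + b))
          ((fderiv ℝ (fderiv ℝ f₂) (A.mulVec y + b)).comp LA) y :=
        ((hd2f2.differentiable (by simp) _).hasFDerivAt).comp y (ha y)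
      have := (ContinuousLinearMap.apply ℝ (Fin d₂ → ℝ) (LA v)).hasFDerivAt.comp y hi
      simpa [ContinuousLinearMap.comp_assoc] using this
    have hR : HasFDerivAt (fun z => LA (fderiv ℝ f₁ z v))
        (LA.comp ((ContinuousLinearMap.apply ℝ (Fin d₁ → ℝ) v).comp
          (fderiv ℝ (fderiv ℝ f₁) y))) y := by
      have hi : HasFDerivAt (fun z => fderiv ℝ f₁ z v)
          ((ContinuousLinearMap.apply ℝ (Fin d₁ → ℝ) v).comp
            (fderiv ℝ (fderiv ℝ f₁) y)) y :=
        (ContinuousLinearMap.apply ℝ (Fin d₁ → ℝ) v).hasFDerivAt.comp y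
          (hd2f1.differentiable (by simp) y).hasFDerivAt
      exact LA.hasFDerivAt.comp y hi
    have hfun : (fun z => fderiv ℝ f₂ (A.mulVec z + b) (LA v))
        = fun z => LA (fderiv ℝ f₁ z v) := by
      funext z; rw [hfirst z v]; rfl
    rw [hfun] at hL
    have := congrArg (fun (B : (Fin d₁ → ℝ) →L[ℝ] (Fin d₂ → ℝ)) => B u) (hL.unique hR)
    simpa [hLAapp] using this
  -- basis expansion of vectors
  have hv : ∀ v : Fin d₁ → ℝ, v = ∑ p : Fin d₁, v p • (Pi.single p 1 : Fin d₁ → ℝ) := by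
    intro v; funext i
    simp [Finset.sum_apply, Pi.single_apply, Finset.sum_ite_eq]
  -- bilinear expansion
  have expand : ∀ (B : (Fin d₁ → ℝ) →L[ℝ] (Fin d₁ → ℝ) →L[ℝ] (Fin d₁ → ℝ))
      (v w : Fin d₁ → ℝ),
      B v w = ∑ p : Fin d₁, ∑ q : Fin d₁,
        (v p * w q) • B (Pi.single p 1) (Pi.single q 1) := by
    intro B v w
    conv_lhs => rw [hv v, hv w]
    rw [map_sum]
    have hterm : ∀ q : Fin d₁,
        (B (∑ p : Fin d₁, v p • (Pi.single p 1 : Fin d₁ → ℝ))) (w q • (Pi.single q 1 : Fin d₁ → ℝ))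
          = ∑ p : Fin d₁, (v p * w q) • B (Pi.single p 1) (Pi.single q 1) := by
      intro q
      rw [map_sum, ContinuousLinearMap.sum_apply]
      refine Finset.sum_congr rfl fun p _ => ?_
      rw [B.map_smul, ContinuousLinearMap.smul_apply, (B (Pi.single p 1)).map_smul,
        smul_smul]
    rw [Finset.sum_congr rfl fun q _ => hterm q]
    exact Finset.sum_comm
  -- A.mulVec over sums
  have hmv_sum : ∀ {ι : Type} (s : Finset ι) (g : ι → Fin d₁ → ℝ),
      A.mulVec (∑ i ∈ s, g i) = ∑ i ∈ s, A.mulVec (g i) := by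
    intro ι s g
    exact map_sum A.mulVecLin g s
  have hmv_smul : ∀ (c : ℝ) (w : Fin d₁ → ℝ), A.mulVec (c • w) = c • A.mulVec w := by
    intro c w
    exact A.mulVecLin.map_smul c w
  -- e_j = LA (Aᵀ e_j)
  have hej : ∀ j : Fin d₂, A.mulVec (Aᵀ.mulVec (Pi.single j 1)) = Pi.single j 1 := by
    intro j
    rw [Matrix.mulVec_mulVec, hA, Matrix.one_mulVec]
  have huval : ∀ (j : Fin d₂) (p : Fin d₁), Aᵀ.mulVec (Pi.single j 1) p = A j p := by
    intro j p
    simp [Matrix.mulVec, dotProduct, Pi.single_apply, Matrix.transpose_apply,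
      Finset.sum_ite_eq]
  -- main identity (part 1)
  have main : ∀ x : Fin d₁ → ℝ,
      (∑ j : Fin d₂, fderiv ℝ (fderiv ℝ f₂) (A.mulVec x + b)
          (Pi.single j 1) (Pi.single j 1))
        = A.mulVec (∑ p : Fin d₁, ∑ q : Fin d₁,
            (Aᵀ * A) p q • fderiv ℝ (fderiv ℝ f₁) x (Pi.single p 1) (Pi.single q 1)) := by
    intro x
    set D : (Fin d₁ → ℝ) →L[ℝ] (Fin d₁ → ℝ) →L[ℝ] (Fin d₁ → ℝ) :=
      fderiv ℝ (fderiv ℝ f₁) x with hD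
    have step1 : ∀ j : Fin d₂,
        fderiv ℝ (fderiv ℝ f₂) (A.mulVec x + b) (Pi.single j 1) (Pi.single j 1)
          = A.mulVec (D (Aᵀ.mulVec (Pi.single j 1)) (Aᵀ.mulVec (Pi.single j 1))) := by
      intro j
      have h := hsecond x (Aᵀ.mulVec (Pi.single j 1)) (Aᵀ.mulVec (Pi.single j 1))
      have he : LA (Aᵀ.mulVec (Pi.single j 1)) = Pi.single j 1 := by
        rw [hLAapp, hej j]
      rw [he] at h
      exact h
    calc (∑ j : Fin d₂, fderiv ℝ (fderiv ℝ f₂) (A.mulVec x + b)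
            (Pi.single j 1) (Pi.single j 1))
        = ∑ j : Fin d₂, A.mulVec (D (Aᵀ.mulVec (Pi.single j 1)) (Aᵀ.mulVec (Pi.single j 1))) := by
          exact Finset.sum_congr rfl fun j _ => step1 j
      _ = A.mulVec (∑ j : Fin d₂, D (Aᵀ.mulVec (Pi.single j 1)) (Aᵀ.mulVec (Pi.single j 1))) := by
          rw [hmv_sum]
      _ = A.mulVec (∑ p : Fin d₁, ∑ q : Fin d₁,
            (Aᵀ * A) p q • D (Pi.single p 1) (Pi.single q 1)) := by
          refine congrArg A.mulVec ?_
          have h1 : ∀ j : Fin d₂, D (Aᵀ.mulVec (Pi.single j 1)) (Aᵀ.mulVec (Pi.single j 1))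
              = ∑ p : Fin d₁, ∑ q : Fin d₁,
                (A j p * A j q) • D (Pi.single p 1) (Pi.single q 1) := by
            intro j
            rw [expand D]
            simp only [huval]
          calc (∑ j : Fin d₂, D (Aᵀ.mulVec (Pi.single j 1)) (Aᵀ.mulVec (Pi.single j 1)))
              = ∑ j : Fin d₂, ∑ p : Fin d₁, ∑ q : Fin d₁,
                  (A j p * A j q) • D (Pi.single p 1) (Pi.single q 1) :=
                Finset.sum_congr rfl fun j _ => h1 j
            _ = ∑ p : Fin d₁, ∑ j : Fin d₂, ∑ q : Fin d₁,
                  (A j p * A j q) • D (Pi.single p 1) (Pi.single q 1) :=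
                Finset.sum_comm
            _ = ∑ p : Fin d₁, ∑ q : Fin d₁, ∑ j : Fin d₂,
                  (A j p * A j q) • D (Pi.single p 1) (Pi.single q 1) :=
                Finset.sum_congr rfl fun p _ => Finset.sum_comm
            _ = ∑ p : Fin d₁, ∑ q : Fin d₁,
                  (Aᵀ * A) p q • D (Pi.single p 1) (Pi.single q 1) := by
                refine Finset.sum_congr rfl fun p _ => Finset.sum_congr rfl fun q _ => ?_
                rw [← Finset.sum_smul]
                congr 1
  refine ⟨main, ?_⟩
  -- part 2
  intro E hE hconst hval x
  rw [main x]
  refine congrArg A.mulVec ?_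
  -- vanishing of derivatives in directions outside E
  have hder0 : ∀ (y : Fin d₁ → ℝ) (p : Fin d₁), p ∉ E →
      fderiv ℝ f₁ y (Pi.single p 1) = 0 := by
    intro y p hp
    set v : Fin d₁ → ℝ := Pi.single p 1 with hvdef
    have hc : ∀ t : ℝ, f₁ (y + t • v) = f₁ y := by
      intro t
      refine hconst _ _ fun i hi => ?_
      have hip : i ≠ p := fun h => hp (h ▸ hi)
      simp [hvdef, Pi.single_apply, hip.symm]
    have hline : HasDerivAt (fun t : ℝ => y + t • v) v 0 := by
      simpa using ((hasDerivAt_id (0 : ℝ)).smul_const v).const_add y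
    have hcomp : HasDerivAt (fun t : ℝ => f₁ (y + t • v)) (fderiv ℝ f₁ y v) 0 := by
      have := (hf₁.differentiable (by simp) (y + (0 : ℝ) • v)).hasFDerivAt.comp_hasDerivAt 0 hline
      simpa [Function.comp_def] using this
    have hconst' : HasDerivAt (fun t : ℝ => f₁ (y + t • v)) 0 0 := by
      have : (fun t : ℝ => f₁ (y + t • v)) = fun _ => f₁ y := funext hc
      rw [this]; exact hasDerivAt_const 0 (f₁ y)
    exact hcomp.unique hconst'
  have hD0 : ∀ (p : Fin d₁), p ∉ E → ∀ w : Fin d₁ → ℝ,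
      fderiv ℝ (fderiv ℝ f₁) x w (Pi.single p 1) = 0 := by
    intro p hp w
    have h1 := (ContinuousLinearMap.apply ℝ (Fin d₁ → ℝ) (Pi.single p 1)).hasFDerivAt.comp x
        (hd2f1.differentiable (by simp) x).hasFDerivAt
    have h2 : HasFDerivAt
        (⇑(ContinuousLinearMap.apply ℝ (Fin d₁ → ℝ) (Pi.single p 1)) ∘ fderiv ℝ f₁)
        (0 : (Fin d₁ → ℝ) →L[ℝ] (Fin d₁ → ℝ)) x := by
      have hfun : (⇑(ContinuousLinearMap.apply ℝ (Fin d₁ → ℝ) (Pi.single p 1)) ∘ fderiv ℝ f₁)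
          = fun _ => (0 : Fin d₁ → ℝ) := funext fun z => hder0 z p hp
      rw [hfun]; exact hasFDerivAt_const 0 x
    have := congrArg (fun (B : (Fin d₁ → ℝ) →L[ℝ] (Fin d₁ → ℝ)) => B w) (h1.unique h2)
    simpa using this
  -- simplify the double sum using hE
  have hsum : (∑ p : Fin d₁, ∑ q : Fin d₁,
      (Aᵀ * A) p q • fderiv ℝ (fderiv ℝ f₁) x (Pi.single p 1) (Pi.single q 1))
      = ∑ p ∈ E, fderiv ℝ (fderiv ℝ f₁) x (Pi.single p 1) (Pi.single p 1) := by
    rw [hE]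
    have : ∀ p : Fin d₁, (∑ q : Fin d₁,
        (Matrix.of fun i j => if i = j ∧ i ∈ E then (1:ℝ) else 0) p q
          • fderiv ℝ (fderiv ℝ f₁) x (Pi.single p 1) (Pi.single q 1))
        = if p ∈ E then fderiv ℝ (fderiv ℝ f₁) x (Pi.single p 1) (Pi.single p 1) else 0 := by
      intro p
      by_cases hp : p ∈ E
      · simp [Matrix.of_apply, hp, ite_smul, Finset.sum_ite_eq]
      · simp [Matrix.of_apply, hp]
    rw [Finset.sum_congr rfl fun p _ => this p]
    simp [Finset.sum_ite_mem]
  rw [hsum]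
  symm
  refine (Finset.sum_subset (Finset.subset_univ E) fun p _ hp => ?_).symm
  exact hD0 p hp (Pi.single p 1)
end
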